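/- Every metrically projective normed space or extremely projective Banach space E is metrically flat: for every isometry i : F → G of Banach spaces, the operator 1_E ⊗ i : E ⊗̂ F → E ⊗̂ G between projective tensor products is an isometry. -/

import Mathlib

/-!
The inequality `‖(1 ⊗ i) u‖ ≤ ‖u‖` holds for every contraction `i`. For the converse, Hahn–Banach
gives a functional of norm `≤ 1` on `E ⊗̂ F` attaining `‖u‖` at `u`, i.e. an operator
`φ : E → F*` with `‖φ‖ ≤ 1`. Since `i` is an isometry, Hahn–Banach also shows that `i* : G* → F*`
maps the closed and the open unit ball onto the corresponding unit balls, so projectivity of `E`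
lifts `φ` to `ψ : E → G*` with `‖ψ‖ < 1 + ε`. The functional on `E ⊗̂ G` defined by `ψ` has norm
`‖ψ‖` and sends `(1 ⊗ i) u` to `‖u‖`, whence `‖u‖ ≤ (1 + ε) ‖(1 ⊗ i) u‖`.
-/

open scoped TensorProduct

/-- The projective tensor norm of an element of the algebraic tensor product `E ⊗ F`:
the infimum of `Σ ‖x_i‖ ‖y_i‖` over all finite representations `u = Σ x_i ⊗ y_i`.
The completed projective tensor product `E ⊗̂ F` is the completion of `E ⊗ F` in this
norm, so a map between completed projective tensor products is an isometry iff it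
preserves this norm on the algebraic tensor products. -/
noncomputable def projNorm {E F : Type} [NormedAddCommGroup E] [NormedSpace ℂ E]
    [NormedAddCommGroup F] [NormedSpace ℂ F] (u : E ⊗[ℂ] F) : ℝ :=
  sInf {r : ℝ | ∃ L : List (E × F),
    u = (L.map fun p => p.1 ⊗ₜ[ℂ] p.2).sum ∧ r = (L.map fun p => ‖p.1‖ * ‖p.2‖).sum}

open TensorProduct

section ProjNorm

variable {E F E' F' : Type} [NormedAddCommGroup E] [NormedAddCommGroup F]

def normMulSum (L : List (E × F)) : ℝ := (L.map fun p => ‖p.1‖ * ‖p.2‖).sum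

lemma normMulSum_append (L M : List (E × F)) :
    normMulSum (L ++ M) = normMulSum L + normMulSum M := by
  simp [normMulSum]

lemma normMulSum_nonneg (L : List (E × F)) : 0 ≤ normMulSum L :=
  List.sum_nonneg fun _ hr => by
    obtain ⟨p, -, rfl⟩ := List.mem_map.1 hr
    positivity

variable [NormedSpace ℂ E] [NormedSpace ℂ F]
  [NormedAddCommGroup E'] [NormedSpace ℂ E'] [NormedAddCommGroup F'] [NormedSpace ℂ F']

def tmulSum (L : List (E × F)) : E ⊗[ℂ] F := (L.map fun p => p.1 ⊗ₜ[ℂ] p.2).sum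

lemma projNorm_eq_sInf (u : E ⊗[ℂ] F) :
    projNorm u = sInf {r | ∃ L : List (E × F), u = tmulSum L ∧ r = normMulSum L} := rfl

lemma tmulSum_append (L M : List (E × F)) : tmulSum (L ++ M) = tmulSum L + tmulSum M := by
  simp [tmulSum]

lemma exists_eq_tmulSum (u : E ⊗[ℂ] F) : ∃ L : List (E × F), u = tmulSum L := by
  induction u using TensorProduct.induction_on with
  | zero => exact ⟨[], rfl⟩
  | tmul x y => exact ⟨[(x, y)], by simp [tmulSum]⟩
  | add u v hu hv =>
    obtain ⟨L, rfl⟩ := hu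
    obtain ⟨M, rfl⟩ := hv
    exact ⟨L ++ M, (tmulSum_append L M).symm⟩

lemma projNorm_le_normMulSum {u : E ⊗[ℂ] F} {L : List (E × F)} (hL : u = tmulSum L) :
    projNorm u ≤ normMulSum L :=
  csInf_le ⟨0, by rintro _ ⟨M, -, rfl⟩; exact normMulSum_nonneg M⟩ ⟨L, hL, rfl⟩

lemma le_mul_projNorm {a C : ℝ} (hC : 0 ≤ C) (u : E ⊗[ℂ] F)
    (h : ∀ L : List (E × F), u = tmulSum L → a ≤ C * normMulSum L) :
    a ≤ C * projNorm u := by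
  rw [projNorm_eq_sInf, ← smul_eq_mul, ← Real.sInf_smul_of_nonneg hC]
  obtain ⟨L, hL⟩ := exists_eq_tmulSum u
  refine le_csInf ⟨_, Set.smul_mem_smul_set ⟨L, hL, rfl⟩⟩ ?_
  rintro _ ⟨_, ⟨M, hM, rfl⟩, rfl⟩
  exact h M hM

lemma projNorm_nonneg (u : E ⊗[ℂ] F) : 0 ≤ projNorm u := by
  simpa using le_mul_projNorm zero_le_one u fun L _ => by simpa using normMulSum_nonneg L

lemma projNorm_add_le (u v : E ⊗[ℂ] F) : projNorm (u + v) ≤ projNorm u + projNorm v := by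
  have h : projNorm (u + v) - projNorm v ≤ 1 * projNorm u :=
    le_mul_projNorm zero_le_one u fun L hL => by
      have h' : projNorm (u + v) - normMulSum L ≤ 1 * projNorm v :=
        le_mul_projNorm zero_le_one v fun M hM => by
          have := projNorm_le_normMulSum (u := u + v) (L := L ++ M)
            (by rw [tmulSum_append, hL, hM])
          rw [normMulSum_append] at this
          linarith
      linarith
  linarith

lemma projNorm_map_le (f : E →L[ℂ] E') (g : F →L[ℂ] F') (u : E ⊗[ℂ] F) :
    projNorm (map (f : E →ₗ[ℂ] E') (g : F →ₗ[ℂ] F') u) ≤ ‖f‖ * ‖g‖ * projNorm u :=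
  le_mul_projNorm (by positivity) u fun L hL => by
    have hmap : map (f : E →ₗ[ℂ] E') (g : F →ₗ[ℂ] F') u
        = tmulSum (L.map fun p => (f p.1, g p.2)) := by
      simp [hL, tmulSum, map_list_sum, Function.comp_def]
    refine (projNorm_le_normMulSum hmap).trans ?_
    simp only [normMulSum, List.map_map, ← List.sum_map_mul_left]
    refine List.sum_le_sum fun p _ => ?_
    simp only [Function.comp_apply]
    rw [mul_mul_mul_comm]
    exact mul_le_mul (f.le_opNorm p.1) (g.le_opNorm p.2) (norm_nonneg _) (by positivity)

lemma projNorm_smul_le (c : ℂ) (u : E ⊗[ℂ] F) : projNorm (c • u) ≤ ‖c‖ * projNorm u := by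
  have hmap : map ((c • ContinuousLinearMap.id ℂ E : E →L[ℂ] E) : E →ₗ[ℂ] E)
      (ContinuousLinearMap.id ℂ F : F →ₗ[ℂ] F) u = c • u := by
    simp [map_smul_left, map_id]
  have hnorm : ‖c • ContinuousLinearMap.id ℂ E‖ * ‖ContinuousLinearMap.id ℂ F‖ ≤ ‖c‖ :=
    calc _ ≤ ‖c‖ * ‖ContinuousLinearMap.id ℂ E‖ * ‖ContinuousLinearMap.id ℂ F‖ := by
          gcongr
          exact norm_smul_le c (ContinuousLinearMap.id ℂ E)
      _ ≤ ‖c‖ * 1 * 1 := by gcongr <;> exact ContinuousLinearMap.norm_id_le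
      _ = ‖c‖ := by ring
  rw [← hmap]
  exact (projNorm_map_le _ _ u).trans (mul_le_mul_of_nonneg_right hnorm (projNorm_nonneg u))

variable (E F) in
noncomputable def projSeminorm : Seminorm ℂ (E ⊗[ℂ] F) :=
  Seminorm.ofSMulLE projNorm (le_antisymm (projNorm_le_normMulSum (L := []) rfl)
    (projNorm_nonneg 0)) projNorm_add_le projNorm_smul_le

lemma norm_le_mul_projNorm {V : Type} [SeminormedAddCommGroup V] [Module ℂ V]
    (g : E ⊗[ℂ] F →ₗ[ℂ] V) {C : ℝ} (hC : 0 ≤ C)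
    (hg : ∀ x y, ‖g (x ⊗ₜ y)‖ ≤ C * (‖x‖ * ‖y‖)) (u : E ⊗[ℂ] F) :
    ‖g u‖ ≤ C * projNorm u :=
  le_mul_projNorm hC u fun L hL => by
    rw [hL, tmulSum, map_list_sum, List.map_map, normMulSum, ← List.sum_map_mul_left]
    refine (List.le_sum_of_subadditive _ norm_zero.le norm_add_le _).trans ?_
    rw [List.map_map]
    exact List.sum_le_sum fun p _ => hg p.1 p.2

lemma exists_norming_functional (u : E ⊗[ℂ] F) :
    ∃ g : E ⊗[ℂ] F →ₗ[ℂ] ℂ, (∀ v, ‖g v‖ ≤ projNorm v) ∧ g u = projNorm u := by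
  let : SeminormedAddCommGroup (E ⊗[ℂ] F) :=
    AddGroupSeminorm.toSeminormedAddCommGroup (projSeminorm E F).toAddGroupSeminorm
  let : NormedSpace ℂ (E ⊗[ℂ] F) := ⟨projNorm_smul_le⟩
  obtain ⟨g, hg, hgu⟩ := exists_dual_vector'' ℂ u
  exact ⟨g, fun v => (g.le_opNorm v).trans (mul_le_of_le_one_left (projNorm_nonneg v) hg), hgu⟩

end ProjNorm

lemma image_closedBall_zero_eq_of_exists_lift {X Y : Type*} [SeminormedAddGroup X]
    [SeminormedAddGroup Y] {τ : Y → X} (hτ : ∀ y, ‖τ y‖ ≤ ‖y‖)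
    (hlift : ∀ x, ∃ y, τ y = x ∧ ‖y‖ ≤ ‖x‖) (r : ℝ) :
    τ '' Metric.closedBall 0 r = Metric.closedBall 0 r := by
  ext x
  simp only [Set.mem_image, mem_closedBall_zero_iff]
  refine ⟨?_, fun hx => ?_⟩
  · rintro ⟨y, hy, rfl⟩
    exact (hτ y).trans hy
  · obtain ⟨y, rfl, hy⟩ := hlift x
    exact ⟨y, hy.trans hx, rfl⟩

lemma image_ball_zero_eq_of_exists_lift {X Y : Type*} [SeminormedAddGroup X]
    [SeminormedAddGroup Y] {τ : Y → X} (hτ : ∀ y, ‖τ y‖ ≤ ‖y‖)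
    (hlift : ∀ x, ∃ y, τ y = x ∧ ‖y‖ ≤ ‖x‖) (r : ℝ) :
    τ '' Metric.ball 0 r = Metric.ball 0 r := by
  ext x
  simp only [Set.mem_image, mem_ball_zero_iff]
  refine ⟨?_, fun hx => ?_⟩
  · rintro ⟨y, hy, rfl⟩
    exact (hτ y).trans_lt hy
  · obtain ⟨y, rfl, hy⟩ := hlift x
    exact ⟨y, hy.trans_lt hx, rfl⟩

section Isometry

variable {E F G : Type} [NormedAddCommGroup E] [NormedSpace ℂ E]
  [NormedAddCommGroup F] [NormedSpace ℂ F] [NormedAddCommGroup G] [NormedSpace ℂ G]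

lemma LinearIsometry.exists_precomp_eq_norm_le (i : F →ₗᵢ[ℂ] G) (f : F →L[ℂ] ℂ) :
    ∃ h : G →L[ℂ] ℂ, ContinuousLinearMap.precomp ℂ i.toContinuousLinearMap h = f ∧
      ‖h‖ ≤ ‖f‖ := by
  let e := i.equivRange
  obtain ⟨h, hh, hnorm⟩ := exists_extension_norm_eq (LinearMap.range i.toLinearMap)
    (f.comp e.symm.toContinuousLinearEquiv.toContinuousLinearMap)
  refine ⟨h, ContinuousLinearMap.ext fun x => ?_, hnorm.trans_le ?_⟩
  · simpa [e] using hh (e x)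
  · exact (f.opNorm_comp_le _).trans
      (mul_le_of_le_one_right (norm_nonneg f) e.symm.toLinearIsometry.norm_toContinuousLinearMap_le)

lemma LinearIsometry.norm_precomp_le (i : F →ₗᵢ[ℂ] G) (h : G →L[ℂ] ℂ) :
    ‖ContinuousLinearMap.precomp ℂ i.toContinuousLinearMap h‖ ≤ ‖h‖ :=
  (h.opNorm_comp_le _).trans
    (mul_le_of_le_one_right (norm_nonneg h) i.norm_toContinuousLinearMap_le)

lemma LinearIsometry.image_precomp_closedBall (i : F →ₗᵢ[ℂ] G) (r : ℝ) :
    ContinuousLinearMap.precomp ℂ i.toContinuousLinearMap '' Metric.closedBall (0 : G →L[ℂ] ℂ) r =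
      Metric.closedBall 0 r :=
  image_closedBall_zero_eq_of_exists_lift i.norm_precomp_le i.exists_precomp_eq_norm_le r

lemma LinearIsometry.image_precomp_ball (i : F →ₗᵢ[ℂ] G) (r : ℝ) :
    ContinuousLinearMap.precomp ℂ i.toContinuousLinearMap '' Metric.ball (0 : G →L[ℂ] ℂ) r =
      Metric.ball 0 r :=
  image_ball_zero_eq_of_exists_lift i.norm_precomp_le i.exists_precomp_eq_norm_le r

lemma projNorm_map_linearIsometry_le (i : F →ₗᵢ[ℂ] G) (u : E ⊗[ℂ] F) :
    projNorm (map LinearMap.id i.toLinearMap u) ≤ projNorm u :=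
  calc _ ≤ ‖ContinuousLinearMap.id ℂ E‖ * ‖i.toContinuousLinearMap‖ * projNorm u :=
        projNorm_map_le _ _ u
    _ ≤ 1 * 1 * projNorm u := by
        gcongr
        exacts [projNorm_nonneg u, ContinuousLinearMap.norm_id_le,
          i.norm_toContinuousLinearMap_le]
    _ = projNorm u := by ring

end Isometry

section Lifting

variable {E F G : Type} [NormedAddCommGroup E] [NormedSpace ℂ E]
  [NormedAddCommGroup F] [NormedSpace ℂ F] [NormedAddCommGroup G] [NormedSpace ℂ G]

lemma exists_bilinear_apply_eq_tmul {g : E ⊗[ℂ] F →ₗ[ℂ] ℂ} (hg : ∀ v, ‖g v‖ ≤ projNorm v) :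
    ∃ φ : E →L[ℂ] F →L[ℂ] ℂ, ‖φ‖ ≤ 1 ∧ ∀ x y, φ x y = g (x ⊗ₜ y) := by
  have hbound : ∀ x y, ‖(mk ℂ E F).compr₂ g x y‖ ≤ 1 * ‖x‖ * ‖y‖ := fun x y => by
    simpa [mul_assoc, normMulSum] using
      (hg (x ⊗ₜ y)).trans (projNorm_le_normMulSum (L := [(x, y)]) (by simp [tmulSum]))
  exact ⟨_, LinearMap.mkContinuous₂_norm_le _ zero_le_one hbound, fun _ _ => rfl⟩

lemma norm_le_mul_projNorm_map {g : E ⊗[ℂ] F →ₗ[ℂ] ℂ} (i : F →ₗ[ℂ] G)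
    (ψ : E →L[ℂ] G →L[ℂ] ℂ) (hψ : ∀ x y, ψ x (i y) = g (x ⊗ₜ y)) (u : E ⊗[ℂ] F) :
    ‖g u‖ ≤ ‖ψ‖ * projNorm (map LinearMap.id i u) := by
  have hg : g = lift ψ.toLinearMap₁₂ ∘ₗ map LinearMap.id i := ext' fun x y => by simp [hψ]
  rw [hg, LinearMap.comp_apply]
  exact norm_le_mul_projNorm _ (norm_nonneg ψ)
    (fun x y => by simpa [mul_assoc] using ψ.le_opNorm₂ x y) _

theorem projNorm_le_projNorm_map_of_forall_lift (i : F →L[ℂ] G) (u : E ⊗[ℂ] F)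
    (hlift : ∀ φ : E →L[ℂ] F →L[ℂ] ℂ, ∀ ε > 0, ∃ ψ : E →L[ℂ] G →L[ℂ] ℂ,
      (ContinuousLinearMap.precomp ℂ i).comp ψ = φ ∧ ‖ψ‖ < ‖φ‖ + ε) :
    projNorm u ≤ projNorm (map LinearMap.id (i : F →ₗ[ℂ] G) u) := by
  obtain ⟨g, hg, hgu⟩ := exists_norming_functional u
  obtain ⟨φ, hφ, hφg⟩ := exists_bilinear_apply_eq_tmul hg
  refine (le_iff_forall_one_lt_le_mul₀ (projNorm_nonneg _)).2 fun c hc => ?_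
  obtain ⟨ψ, hψφ, hψ⟩ := hlift φ (c - 1) (by linarith)
  have hψg : ∀ x y, ψ x (i y) = g (x ⊗ₜ y) := fun x y => by rw [← hφg, ← hψφ]; rfl
  calc projNorm u = ‖g u‖ := by
        rw [hgu, Complex.norm_real, Real.norm_of_nonneg (projNorm_nonneg u)]
    _ ≤ ‖ψ‖ * projNorm (map LinearMap.id (i : F →ₗ[ℂ] G) u) := norm_le_mul_projNorm_map _ ψ hψg u
    _ ≤ c * projNorm (map LinearMap.id (i : F →ₗ[ℂ] G) u) := by
        gcongr
        · exact projNorm_nonneg _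
        · linarith
    _ = _ := mul_comm _ _

end Lifting

theorem stmt12_general (E : Type) [NormedAddCommGroup E] [NormedSpace ℂ E]
    (hproj :
      (∀ (X Y : Type) [NormedAddCommGroup X] [NormedSpace ℂ X] [CompleteSpace X]
          [NormedAddCommGroup Y] [NormedSpace ℂ Y] [CompleteSpace Y] (τ : Y →L[ℂ] X),
        τ '' Metric.closedBall 0 1 = Metric.closedBall (0 : X) 1 →
        ∀ φ : E →L[ℂ] X, ∃ ψ : E →L[ℂ] Y, τ.comp ψ = φ ∧ ‖ψ‖ = ‖φ‖) ∨
      (∀ (X Y : Type) [NormedAddCommGroup X] [NormedSpace ℂ X] [CompleteSpace X]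
          [NormedAddCommGroup Y] [NormedSpace ℂ Y] [CompleteSpace Y] (τ : Y →L[ℂ] X),
        τ '' Metric.ball 0 1 = Metric.ball (0 : X) 1 →
        ∀ φ : E →L[ℂ] X, ∀ ε > (0 : ℝ),
          ∃ ψ : E →L[ℂ] Y, τ.comp ψ = φ ∧ ‖ψ‖ < ‖φ‖ + ε)) :
    ∀ (F G : Type) [NormedAddCommGroup F] [NormedSpace ℂ F] [CompleteSpace F]
      [NormedAddCommGroup G] [NormedSpace ℂ G] [CompleteSpace G]
      (i : F →ₗᵢ[ℂ] G) (u : E ⊗[ℂ] F),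
      projNorm (TensorProduct.map LinearMap.id i.toLinearMap u) = projNorm u := by
  intro F G _ _ _ _ _ _ i u
  refine le_antisymm (projNorm_map_linearIsometry_le i u)
    (projNorm_le_projNorm_map_of_forall_lift i.toContinuousLinearMap u fun φ ε hε => ?_)
  rcases hproj with hmetric | hextreme
  · obtain ⟨ψ, hψφ, hψ⟩ := hmetric _ _ _ (i.image_precomp_closedBall 1) φ
    exact ⟨ψ, hψφ, by linarith⟩
  · exact hextreme _ _ _ (i.image_precomp_ball 1) φ ε hε

/-- Every metrically projective or extremely projective Banach space `E` is metrically
flat: for every isometry `i : F → G` of Banach spaces, the induced operator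
`1_E ⊗ i : E ⊗̂ F → E ⊗̂ G` between projective tensor products is an isometry, i.e.
it preserves the projective tensor norm. -/
theorem stmt12 (E : Type) [NormedAddCommGroup E] [NormedSpace ℂ E] [CompleteSpace E]
    (hproj :
      (∀ (X Y : Type) [NormedAddCommGroup X] [NormedSpace ℂ X] [CompleteSpace X]
          [NormedAddCommGroup Y] [NormedSpace ℂ Y] [CompleteSpace Y] (τ : Y →L[ℂ] X),
        τ '' Metric.closedBall 0 1 = Metric.closedBall (0 : X) 1 →
        ∀ φ : E →L[ℂ] X, ∃ ψ : E →L[ℂ] Y, τ.comp ψ = φ ∧ ‖ψ‖ = ‖φ‖) ∨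
      (∀ (X Y : Type) [NormedAddCommGroup X] [NormedSpace ℂ X] [CompleteSpace X]
          [NormedAddCommGroup Y] [NormedSpace ℂ Y] [CompleteSpace Y] (τ : Y →L[ℂ] X),
        τ '' Metric.ball 0 1 = Metric.ball (0 : X) 1 →
        ∀ φ : E →L[ℂ] X, ∀ ε > (0 : ℝ),
          ∃ ψ : E →L[ℂ] Y, τ.comp ψ = φ ∧ ‖ψ‖ < ‖φ‖ + ε)) :
    ∀ (F G : Type) [NormedAddCommGroup F] [NormedSpace ℂ F] [CompleteSpace F]
      [NormedAddCommGroup G] [NormedSpace ℂ G] [CompleteSpace G]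
      (i : F →ₗᵢ[ℂ] G) (u : E ⊗[ℂ] F),
      projNorm (TensorProduct.map LinearMap.id i.toLinearMap u) = projNorm u :=
  stmt12_general E hproj
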